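/- arXiv:2409.13352 — 4 statements merged into one kernel-verified Lean document; each statement's English description precedes it below -/
import Mathlib

section
/- Let n ≥ 1, r ≥ 1 and let q = x_0^2 + x_1^2 + ⋯ + x_{n-2}^2 + x_{n-1}·x_n ∈ ℂ[x_0,…,x_n]. Then the ℂ-linear span of the iterated partial derivatives ∂^α(q^r), as α ranges over all multi-indices in ℕ^{n+1} of total degree |α| = r, equals the space of all homogeneous polynomials of degree r in x_0,…,x_n. In particular this span has dimension binom(n+r, n), i.e. the catalecticant rank of q^r in order r is binom(n+r, n). -/
/-!
Write `W_m` for the span of the order-`m` partials of `q^m`. Multiplication by any variable maps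
`W_m` into `W_{m+1}`. Indeed, the first partials of `q` span the linear forms, so `x_j q^m` is a
combination of first partials of `q^{m+1}`, and by the Leibniz rule
`∂^α (x_j q^m) = x_j ∂^α q^m + α_j ∂^{α - e_j} q^m`. The last term lies in `W_{m+1}` because the
operator `Δ = ∑_{i ≤ n-2} ∂_i² + 4 ∂_{n-1} ∂_n` satisfies `Δ q^{m+1} = 2(m+1)(n+2m+1) q^m`.
As `W_0 = ℂ` and, by Euler's identity, every form of degree `m+1` is a combination of the
`x_j ∂_j f` with `∂_j f` of degree `m`, induction shows that `W_m` contains all forms of degree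
`m`; the reverse inclusion is degree counting. The dimension is the number of monomials of
degree `r` in `n + 1` variables.
-/

open MvPolynomial

/-- Iterated partial derivative `∂^α f`: `MvPolynomial.pderiv i` is applied `α i` times
for each variable `i`. -/
noncomputable def pdPow {n : ℕ} (α : Fin n →₀ ℕ) (f : MvPolynomial (Fin n) ℂ) :
    MvPolynomial (Fin n) ℂ :=
  (List.finRange n).foldr (fun i g => (fun h => MvPolynomial.pderiv i h)^[α i] g) f

/-- The quadric `q = x_0^2 + ⋯ + x_{n-2}^2 + x_{n-1}·x_n` in `ℂ[x_0,…,x_n]`. -/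
noncomputable def qForm (n : ℕ) : MvPolynomial (Fin (n + 1)) ℂ :=
  (∑ i ∈ Finset.univ.filter (fun i : Fin (n + 1) => (i : ℕ) + 2 ≤ n), X i ^ 2)
    + X (⟨n - 1, by omega⟩ : Fin (n + 1)) * X (⟨n, by omega⟩ : Fin (n + 1))

theorem pow_succ_mul_of_mul_eq_mul_add_one {A : Type*} [Semiring A] {d x : A}
    (h : d * x = x * d + 1) (k : ℕ) :
    d ^ (k + 1) * x = x * d ^ (k + 1) + (k + 1) • d ^ k := by
  induction k with
  | zero => simp [h]
  | succ k ih =>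
    rw [pow_succ', mul_assoc, ih, mul_add, ← mul_assoc, h, add_mul, one_mul, mul_smul_comm,
      ← pow_succ', mul_assoc, ← pow_succ', add_smul (k + 1 : ℕ) 1, one_smul]
    abel

namespace MvPolynomial

section IteratedPDeriv

variable {σ R : Type*} [CommSemiring R]

theorem pderiv_comm (i j : σ) (f : MvPolynomial σ R) :
    pderiv i (pderiv j f) = pderiv j (pderiv i f) := by
  classical
  induction f using MvPolynomial.induction_on' with
  | add p q hp hq => simp only [map_add, hp, hq]
  | monomial m a =>
    simp only [pderiv_monomial, tsub_tsub, add_comm (Finsupp.single i 1)]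
    congr 1
    rcases eq_or_ne i j with rfl | hij
    · rfl
    · simp only [Finsupp.tsub_apply, Finsupp.single_eq_of_ne hij,
        Finsupp.single_eq_of_ne hij.symm, tsub_zero]
      ring

theorem pderiv_pderiv_pow_succ (a b : σ) (q : MvPolynomial σ R) (m : ℕ) :
    pderiv a (pderiv b (q ^ (m + 1))) = (m + 1) *
      (m * q ^ (m - 1) * pderiv a q * pderiv b q + q ^ m * pderiv a (pderiv b q)) := by
  rw [pderiv_pow, pderiv_mul, pderiv_mul, pderiv_pow, Nat.add_sub_cancel,
    Derivation.map_natCast]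
  push_cast
  ring

noncomputable abbrev pderivEnd (i : σ) : Module.End R (MvPolynomial σ R) := (pderiv i).toLinearMap

theorem commute_pderivEnd (i j : σ) :
    Commute (pderivEnd i : Module.End R (MvPolynomial σ R)) (pderivEnd j) :=
  LinearMap.ext (pderiv_comm i j)

theorem pairwise_commute_pderivEnd_pow (α : σ → ℕ) (s : Set σ) :
    s.Pairwise (Function.onFun Commute
      fun i => (pderivEnd i : Module.End R (MvPolynomial σ R)) ^ α i) :=
  fun i _ j _ _ => (commute_pderivEnd i j).pow_pow _ _

theorem pderivEnd_mul_mulLeft_X_self (i : σ) :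
    (pderivEnd i : Module.End R (MvPolynomial σ R)) * LinearMap.mulLeft R (X i)
      = LinearMap.mulLeft R (X i) * pderivEnd i + 1 := by
  refine LinearMap.ext fun f => ?_
  simp [add_comm]

theorem commute_pderivEnd_mulLeft_X {i j : σ} (h : j ≠ i) :
    Commute (pderivEnd i : Module.End R (MvPolynomial σ R)) (LinearMap.mulLeft R (X j)) := by
  refine LinearMap.ext fun f => ?_
  simp [pderiv_X_of_ne h]

variable [Fintype σ]

noncomputable def iteratedPDeriv (α : σ →₀ ℕ) : Module.End R (MvPolynomial σ R) :=
  Finset.univ.noncommProd (fun i => pderivEnd i ^ α i) (pairwise_commute_pderivEnd_pow _ _)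

theorem iteratedPDeriv_zero :
    (iteratedPDeriv 0 : Module.End R (MvPolynomial σ R)) = 1 := by
  rw [iteratedPDeriv, Finset.noncommProd_eq_pow_card _ _ _ 1 (by simp), one_pow]

theorem iteratedPDeriv_add (α β : σ →₀ ℕ) :
    (iteratedPDeriv (α + β) : Module.End R (MvPolynomial σ R))
      = iteratedPDeriv α * iteratedPDeriv β := by
  rw [iteratedPDeriv, iteratedPDeriv, iteratedPDeriv, ← Finset.noncommProd_mul_distrib]
  · exact Finset.noncommProd_congr rfl (fun i _ => pow_add _ _ _) _
  · exact fun i _ j _ _ => (commute_pderivEnd i j).pow_pow _ _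

theorem iteratedPDeriv_single (i : σ) (k : ℕ) :
    iteratedPDeriv (Finsupp.single i k) = (pderivEnd i : Module.End R (MvPolynomial σ R)) ^ k := by
  classical
  rw [iteratedPDeriv, ← Finset.mul_noncommProd_erase _ (Finset.mem_univ i) _ _
    (pairwise_commute_pderivEnd_pow _ _), Finset.noncommProd_eq_pow_card _ _ _ 1]
  · simp
  · intro j hj
    simp [Finsupp.single_eq_of_ne (Finset.ne_of_mem_erase hj)]

theorem commute_iteratedPDeriv_mulLeft_X {α : σ →₀ ℕ} {j : σ} (hj : α j = 0) :
    Commute (iteratedPDeriv α) (LinearMap.mulLeft R (X j : MvPolynomial σ R)) := by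
  refine (Finset.noncommProd_commute _ _ _ _ fun i _ => ?_).symm
  rcases eq_or_ne j i with rfl | hij
  · rw [hj, pow_zero]
    exact Commute.one_right _
  · exact ((commute_pderivEnd_mulLeft_X hij).pow_left _).symm

theorem iteratedPDeriv_mul_mulLeft_X (α : σ →₀ ℕ) (j : σ) :
    iteratedPDeriv α * LinearMap.mulLeft R (X j : MvPolynomial σ R)
      = LinearMap.mulLeft R (X j) * iteratedPDeriv α
        + α j • iteratedPDeriv (α - Finsupp.single j 1) := by
  by_cases hj : α j = 0
  · rw [hj, zero_smul, add_zero]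
    exact commute_iteratedPDeriv_mulLeft_X hj
  obtain ⟨k, hk⟩ := Nat.exists_eq_add_one_of_ne_zero hj
  obtain ⟨β, hβ, rfl⟩ : ∃ β : σ →₀ ℕ, β j = 0 ∧ α = β + Finsupp.single j (k + 1) :=
    ⟨α.erase j, Finsupp.erase_same, by rw [← hk, Finsupp.erase_add_single]⟩
  have hsub : β + Finsupp.single j (k + 1) - Finsupp.single j 1 = β + Finsupp.single j k := by
    ext i
    by_cases h : i = j <;> simp [h, hβ]
  rw [hk, hsub, iteratedPDeriv_add, iteratedPDeriv_add, iteratedPDeriv_single,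
    iteratedPDeriv_single, mul_assoc,
    pow_succ_mul_of_mul_eq_mul_add_one (pderivEnd_mul_mulLeft_X_self j), mul_add, ← mul_assoc,
    (commute_iteratedPDeriv_mulLeft_X hβ).eq, mul_assoc, mul_smul_comm]

theorem IsHomogeneous.iteratedPDeriv {φ : MvPolynomial σ R} {n : ℕ} (h : φ.IsHomogeneous n)
    (α : σ →₀ ℕ) : (iteratedPDeriv α φ).IsHomogeneous (n - α.degree) := by
  induction α using Finsupp.induction_linear generalizing φ n with
  | zero => simpa [iteratedPDeriv_zero] using h
  | add α β hα hβ =>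
    rw [iteratedPDeriv_add, Module.End.mul_apply, map_add, add_comm, ← Nat.sub_sub]
    exact hα (hβ h)
  | single i k =>
    rw [iteratedPDeriv_single, Finsupp.degree_single]
    induction k with
    | zero => simpa using h
    | succ k ih =>
      rw [pow_succ', Module.End.mul_apply, ← Nat.sub_sub]
      exact ih.pderiv

end IteratedPDeriv

section PartialsSpan

variable {σ R : Type*} [Fintype σ] [CommSemiring R]

noncomputable def partialsSpan (f : MvPolynomial σ R) (k : ℕ) : Submodule R (MvPolynomial σ R) :=
  Submodule.span R {p | ∃ α : σ →₀ ℕ, α.degree = k ∧ p = iteratedPDeriv α f}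

theorem iteratedPDeriv_mem_partialsSpan {f g : MvPolynomial σ R} {k : ℕ}
    (hg : g ∈ partialsSpan f k) (δ : σ →₀ ℕ) :
    iteratedPDeriv δ g ∈ partialsSpan f (k + δ.degree) := by
  suffices partialsSpan f k ≤ (partialsSpan f (k + δ.degree)).comap (iteratedPDeriv δ) from this hg
  refine Submodule.span_le.2 ?_
  rintro _ ⟨α, rfl, rfl⟩
  refine Submodule.subset_span ⟨δ + α, by rw [map_add, add_comm], ?_⟩
  rw [iteratedPDeriv_add, Module.End.mul_apply]

theorem pderiv_pderiv_mem_partialsSpan (a b : σ) (f : MvPolynomial σ R) :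
    pderiv a (pderiv b f) ∈ partialsSpan f 2 :=
  Submodule.subset_span ⟨Finsupp.single a 1 + Finsupp.single b 1, by simp,
    by simp [iteratedPDeriv_add, iteratedPDeriv_single]⟩

theorem partialsSpan_le_homogeneousSubmodule {f : MvPolynomial σ R} {n : ℕ}
    (hf : f.IsHomogeneous n) (k : ℕ) :
    partialsSpan f k ≤ homogeneousSubmodule σ R (n - k) :=
  Submodule.span_le.2 <| by
    rintro _ ⟨α, rfl, rfl⟩
    exact hf.iteratedPDeriv α

variable {K : Type*} [Field K] [CharZero K] {q : MvPolynomial σ K}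

theorem X_mul_pow_mem_partialsSpan
    (hX : ∀ j, X j ∈ Submodule.span K (Set.range fun i => pderiv i q)) (j : σ) (m : ℕ) :
    X j * q ^ m ∈ partialsSpan (q ^ (m + 1)) 1 := by
  have hm : ((m + 1 : ℕ) : K) ≠ 0 := Nat.cast_ne_zero.2 m.succ_ne_zero
  let L := ((m + 1 : ℕ) : K) • LinearMap.mulLeft K (q ^ m)
  have hL : Submodule.span K (Set.range fun i => pderiv i q)
      ≤ (partialsSpan (q ^ (m + 1)) 1).comap L := by
    refine Submodule.span_le.2 ?_
    rintro _ ⟨i, rfl⟩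
    refine Submodule.subset_span ⟨Finsupp.single i 1, Finsupp.degree_single _ _, ?_⟩
    rw [iteratedPDeriv_single, pow_one, Derivation.coeFn_coe, pderiv_pow, Nat.add_sub_cancel,
      LinearMap.smul_apply, LinearMap.mulLeft_apply, Nat.cast_smul_eq_nsmul, nsmul_eq_mul,
      mul_assoc]
  have := hL (hX j)
  simp only [Submodule.mem_comap, L, LinearMap.smul_apply, LinearMap.mulLeft_apply] at this
  rwa [Submodule.smul_mem_iff _ hm, mul_comm] at this

theorem X_mul_mem_partialsSpan
    (hX : ∀ j, X j ∈ Submodule.span K (Set.range fun i => pderiv i q))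
    (hq : ∀ m, q ^ m ∈ partialsSpan (q ^ (m + 1)) 2)
    {m : ℕ} {p : MvPolynomial σ K} (hp : p ∈ partialsSpan (q ^ m) m) (j : σ) :
    X j * p ∈ partialsSpan (q ^ (m + 1)) (m + 1) := by
  suffices partialsSpan (q ^ m) m ≤
      (partialsSpan (q ^ (m + 1)) (m + 1)).comap (LinearMap.mulLeft K (X j)) from this hp
  refine Submodule.span_le.2 ?_
  rintro _ ⟨α, rfl, rfl⟩
  have leibniz := LinearMap.congr_fun (iteratedPDeriv_mul_mulLeft_X α j) (q ^ α.degree)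
  simp only [Module.End.mul_apply, LinearMap.add_apply, LinearMap.smul_apply,
    LinearMap.mulLeft_apply] at leibniz
  rw [SetLike.mem_coe, Submodule.mem_comap, LinearMap.mulLeft_apply,
    eq_sub_of_add_eq leibniz.symm]
  have hmain := iteratedPDeriv_mem_partialsSpan (X_mul_pow_mem_partialsSpan hX j α.degree) α
  rw [add_comm 1] at hmain
  by_cases hj : α j = 0
  · rwa [hj, zero_smul, sub_zero]
  refine Submodule.sub_mem _ hmain (Submodule.smul_of_tower_mem _ _ ?_)
  have hle : Finsupp.single j 1 ≤ α := Finsupp.single_le_iff.2 (Nat.one_le_iff_ne_zero.2 hj)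
  have hdeg : (α - Finsupp.single j 1).degree + 1 = α.degree := by
    conv_rhs => rw [← tsub_add_cancel_of_le hle]
    rw [map_add, Finsupp.degree_single]
  have := iteratedPDeriv_mem_partialsSpan (hq α.degree) (α - Finsupp.single j 1)
  rw [← hdeg]
  rwa [← hdeg, add_comm 2] at this

theorem homogeneousSubmodule_le_partialsSpan
    (hX : ∀ j, X j ∈ Submodule.span K (Set.range fun i => pderiv i q))
    (hq : ∀ m, q ^ m ∈ partialsSpan (q ^ (m + 1)) 2) (m : ℕ) :
    homogeneousSubmodule σ K m ≤ partialsSpan (q ^ m) m := by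
  induction m with
  | zero =>
    intro p hp
    rw [mem_homogeneousSubmodule, ← totalDegree_zero_iff_isHomogeneous,
      totalDegree_eq_zero_iff_eq_C] at hp
    rw [hp, ← mul_one (C _), C_mul']
    exact Submodule.smul_mem _ _
      (Submodule.subset_span ⟨0, map_zero _, by simp [iteratedPDeriv_zero]⟩)
  | succ m ih =>
    intro p hp
    have hm : ((m + 1 : ℕ) : K) ≠ 0 := Nat.cast_ne_zero.2 m.succ_ne_zero
    rw [← Submodule.smul_mem_iff _ hm, Nat.cast_smul_eq_nsmul, ← hp.sum_X_mul_pderiv]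
    exact Submodule.sum_mem _ fun i _ => X_mul_mem_partialsSpan hX hq (ih hp.pderiv) i

end PartialsSpan

theorem finrank_homogeneousSubmodule (σ K : Type*) [Fintype σ] [Field K] (r : ℕ) :
    Module.finrank K (homogeneousSubmodule σ K r) = (Fintype.card σ + r - 1).choose r := by
  classical
  have hsupp : {d : σ →₀ ℕ | d.degree = r}
      = ((Finset.univ : Finset σ).finsuppAntidiag r : Set (σ →₀ ℕ)) := by
    ext d
    simp [Finset.mem_finsuppAntidiag, Finsupp.degree_eq_sum]
  rw [homogeneousSubmodule_eq_finsupp_supported, hsupp,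
    (AddMonoidAlgebra.supportedEquivFinsupp _).finrank_eq, Module.finrank_finsupp_self]
  simp [Finset.card_finsuppAntidiag_nat_eq_choose]

end MvPolynomial

theorem pdPow_eq_iteratedPDeriv {N : ℕ} (α : Fin N →₀ ℕ) (f : MvPolynomial (Fin N) ℂ) :
    pdPow α f = iteratedPDeriv α f := by
  simp only [iteratedPDeriv, Finset.noncommProd, Fin.univ_val_map, Multiset.noncommProd_coe,
    List.ofFn_eq_map, pdPow]
  induction List.finRange N with
  | nil => rfl
  | cons i L ih => simp [ih, Module.End.coe_pow]

theorem span_pdPow_eq_partialsSpan {N : ℕ} (f : MvPolynomial (Fin N) ℂ) (k : ℕ) :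
    Submodule.span ℂ {p | ∃ α : Fin N →₀ ℕ, (∑ i, α i) = k ∧ p = pdPow α f}
      = partialsSpan f k := by
  simp_rw [pdPow_eq_iteratedPDeriv, ← Finsupp.degree_eq_sum]
  rfl

section Quadric

variable {n : ℕ}

def squareIndices (n : ℕ) : Finset (Fin (n + 1)) :=
  Finset.univ.filter fun i => (i : ℕ) + 2 ≤ n

def penult (n : ℕ) : Fin (n + 1) := ⟨n - 1, by omega⟩

theorem qForm_eq (n : ℕ) :
    qForm n = ∑ i ∈ squareIndices n, X i ^ 2 + X (penult n) * X (Fin.last n) := rfl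

theorem isHomogeneous_qForm (n : ℕ) : (qForm n).IsHomogeneous 2 :=
  (IsHomogeneous.sum _ _ _ fun i _ => isHomogeneous_X_pow i 2).add
    ((isHomogeneous_X _ _).mul (isHomogeneous_X _ _))

theorem mem_squareIndices {i : Fin (n + 1)} : i ∈ squareIndices n ↔ (i : ℕ) + 2 ≤ n := by
  simp [squareIndices]

theorem card_squareIndices : (squareIndices n).card = n - 1 := by
  have : squareIndices n = Finset.univ.filter fun i : Fin (n + 1) => (i : ℕ) < n - 1 :=
    Finset.filter_congr fun i _ => by omega
  rw [this, Fin.card_filter_val_lt]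
  omega

theorem penult_ne_last (hn : 1 ≤ n) : penult n ≠ Fin.last n := by
  simp only [Ne, penult, Fin.ext_iff, Fin.val_last]
  omega

theorem penult_notMem_squareIndices : penult n ∉ squareIndices n := by
  simp only [mem_squareIndices, penult]
  omega

theorem last_notMem_squareIndices : Fin.last n ∉ squareIndices n := by
  simp [mem_squareIndices]

theorem mem_squareIndices_or_eq_penult_or_eq_last (j : Fin (n + 1)) :
    j ∈ squareIndices n ∨ j = penult n ∨ j = Fin.last n := by
  simp only [mem_squareIndices, penult, Fin.ext_iff, Fin.val_last]
  omega

theorem pderiv_qForm_of_mem {i : Fin (n + 1)} (hi : i ∈ squareIndices n) :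
    pderiv i (qForm n) = 2 * X i := by
  have h₁ : penult n ≠ i := fun h => penult_notMem_squareIndices (h ▸ hi)
  have h₂ : Fin.last n ≠ i := fun h => last_notMem_squareIndices (h ▸ hi)
  simp [qForm_eq, pderiv_X, Pi.single_apply, h₁, h₂, hi]

theorem pderiv_qForm_penult (hn : 1 ≤ n) : pderiv (penult n) (qForm n) = X (Fin.last n) := by
  simp [qForm_eq, pderiv_X, Pi.single_apply, penult_ne_last hn, penult_notMem_squareIndices]

theorem pderiv_qForm_last (hn : 1 ≤ n) : pderiv (Fin.last n) (qForm n) = X (penult n) := by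
  simp [qForm_eq, pderiv_X, Pi.single_apply, (penult_ne_last hn).symm, last_notMem_squareIndices]

theorem X_mem_span_pderiv_qForm (hn : 1 ≤ n) (j : Fin (n + 1)) :
    X j ∈ Submodule.span ℂ (Set.range fun i => pderiv i (qForm n)) := by
  obtain hj | rfl | rfl := mem_squareIndices_or_eq_penult_or_eq_last j
  · have : X j = (2⁻¹ : ℂ) • pderiv j (qForm n) := by
      rw [pderiv_qForm_of_mem hj, two_mul, smul_add, ← add_smul]
      norm_num
    rw [this]
    exact Submodule.smul_mem _ _ (Submodule.subset_span ⟨j, rfl⟩)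
  · rw [← pderiv_qForm_last hn]
    exact Submodule.subset_span ⟨_, rfl⟩
  · rw [← pderiv_qForm_penult hn]
    exact Submodule.subset_span ⟨_, rfl⟩

theorem laplacian_qForm_pow (hn : 1 ≤ n) (m : ℕ) :
    ∑ i ∈ squareIndices n, pderiv i (pderiv i (qForm n ^ (m + 1)))
        + 4 • pderiv (penult n) (pderiv (Fin.last n) (qForm n ^ (m + 1)))
      = (2 * (m + 1) * (n + 2 * m + 1)) • qForm n ^ m := by
  have hS : ∀ i ∈ squareIndices n, pderiv i (pderiv i (qForm n ^ (m + 1)))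
      = ((m : MvPolynomial (Fin (n + 1)) ℂ) + 1) * (4 * (m : MvPolynomial (Fin (n + 1)) ℂ)
          * qForm n ^ (m - 1) * X i ^ 2) + ((m : MvPolynomial (Fin (n + 1)) ℂ) + 1)
          * (2 * qForm n ^ m) := by
    intro i hi
    have h₂ : pderiv i (2 : MvPolynomial (Fin (n + 1)) ℂ) = 0 := by
      simpa using (pderiv i).map_natCast 2
    rw [pderiv_pderiv_pow_succ, pderiv_qForm_of_mem hi, pderiv_mul, h₂, pderiv_X_self]
    ring
  have huv : pderiv (penult n) (pderiv (Fin.last n) (qForm n ^ (m + 1)))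
      = ((m : MvPolynomial (Fin (n + 1)) ℂ) + 1) * ((m : MvPolynomial (Fin (n + 1)) ℂ)
          * qForm n ^ (m - 1) * (X (penult n) * X (Fin.last n)) + qForm n ^ m) := by
    rw [pderiv_pderiv_pow_succ, pderiv_qForm_penult hn, pderiv_qForm_last hn, pderiv_X_self]
    ring
  have hpow : (m : MvPolynomial (Fin (n + 1)) ℂ) * qForm n ^ (m - 1) * qForm n
      = m * qForm n ^ m := by
    cases m <;> simp [pow_succ, mul_assoc]
  rw [Finset.sum_congr rfl hS, huv, Finset.sum_add_distrib, ← Finset.mul_sum, ← Finset.mul_sum,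
    Finset.sum_const, card_squareIndices]
  have hq := qForm_eq n
  set q := qForm n
  simp only [nsmul_eq_mul, Nat.cast_sub hn]
  push_cast
  -- `∑ (∂_i q)² + 4 ∂_{n-1} q ∂_n q = 4 q` and `∑ ∂_i² q + 4 ∂_{n-1} ∂_n q = 2 (n + 1)`
  linear_combination 4 * (m + 1) * hpow - 4 * m * (m + 1) * q ^ (m - 1) * hq

theorem qForm_pow_mem_partialsSpan (hn : 1 ≤ n) (m : ℕ) :
    qForm n ^ m ∈ partialsSpan (qForm n ^ (m + 1)) 2 := by
  have hc : ((2 * (m + 1) * (n + 2 * m + 1) : ℕ) : ℂ) ≠ 0 := Nat.cast_ne_zero.2 (by positivity)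
  rw [← Submodule.smul_mem_iff _ hc, Nat.cast_smul_eq_nsmul, ← laplacian_qForm_pow hn m]
  exact add_mem (Submodule.sum_mem _ fun i _ => pderiv_pderiv_mem_partialsSpan _ _ _)
    (Submodule.smul_of_tower_mem _ _ (pderiv_pderiv_mem_partialsSpan _ _ _))

end Quadric

theorem statement0_general (n r : ℕ) (hn : 1 ≤ n) :
    Submodule.span ℂ
        {p : MvPolynomial (Fin (n + 1)) ℂ |
          ∃ α : Fin (n + 1) →₀ ℕ, (∑ i, α i) = r ∧ p = pdPow α (qForm n ^ r)}
      = homogeneousSubmodule (Fin (n + 1)) ℂ r ∧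
    Module.finrank ℂ
        (Submodule.span ℂ
          {p : MvPolynomial (Fin (n + 1)) ℂ |
            ∃ α : Fin (n + 1) →₀ ℕ, (∑ i, α i) = r ∧ p = pdPow α (qForm n ^ r)})
      = (n + r).choose n := by
  have hspan : partialsSpan (qForm n ^ r) r = homogeneousSubmodule (Fin (n + 1)) ℂ r := by
    refine le_antisymm ?_ (homogeneousSubmodule_le_partialsSpan (X_mem_span_pderiv_qForm hn)
      (qForm_pow_mem_partialsSpan hn) r)
    simpa [two_mul] using partialsSpan_le_homogeneousSubmodule ((isHomogeneous_qForm n).pow r) r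
  rw [span_pdPow_eq_partialsSpan, hspan, finrank_homogeneousSubmodule, Fintype.card_fin,
    Nat.add_right_comm, Nat.add_sub_cancel, Nat.choose_symm_add]
  exact ⟨rfl, rfl⟩

/-- The span of the iterated partials `∂^α(q^r)` with `|α| = r` is the space of all
homogeneous polynomials of degree `r`; in particular its dimension is `binom(n+r,n)`,
the catalecticant rank of `q^r` in order `r`. -/
theorem statement0 (n r : ℕ) (hn : 1 ≤ n) (hr : 1 ≤ r) :
    Submodule.span ℂ
        {p : MvPolynomial (Fin (n + 1)) ℂ |
          ∃ α : Fin (n + 1) →₀ ℕ, (∑ i, α i) = r ∧ p = pdPow α (qForm n ^ r)}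
      = homogeneousSubmodule (Fin (n + 1)) ℂ r ∧
    Module.finrank ℂ
        (Submodule.span ℂ
          {p : MvPolynomial (Fin (n + 1)) ℂ |
            ∃ α : Fin (n + 1) →₀ ℕ, (∑ i, α i) = r ∧ p = pdPow α (qForm n ^ r)})
      = (n + r).choose n :=
  statement0_general n r hn
end

section
/- For integers n ≥ 2 and r ≥ 2, define AH(n,r) := 6 if (n,r) = (2,2), AH(n,r) := 10 if (n,r) = (3,2), AH(n,r) := 15 if (n,r) = (4,2), and AH(n,r) := ⌈ binom(n+2r, n) / (n+1) ⌉ otherwise (this is the Alexander–Hirschowitz rank of a general form of degree 2r in n+1 variables). Then for all n ≥ 2 and r ≥ 2 one has binom(n+r, n) ≤ AH(n,r), and equality holds if and only if (n,r) ∈ {(2,2), (2,3), (2,4), (3,2), (4,2), (5,2)}. -/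
lemma stepR (n r : ℕ) (h : (n+1) * (n+r).choose n < (n+2*r).choose n) :
    (n+1) * (n+(r+1)).choose n < (n+2*(r+1)).choose n := by
  set a := (n+r).choose n with ha
  set b := (n+2*r).choose n with hb
  set a' := (n+(r+1)).choose n with ha'
  set c := (n+2*r+1).choose (2*r+1) with hc
  set b' := (n+2*(r+1)).choose n with hb'
  have h1 : (n+r+1) * a = a' * (r+1) := by
    rw [ha, ha', Nat.choose_symm_add, Nat.choose_symm_add,
      show n+(r+1) = (n+r)+1 by ring]
    exact Nat.add_one_mul_choose_eq (n+r) r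
  have h2 : (n+2*r+1) * b = c * (2*r+1) := by
    rw [hb, hc, Nat.choose_symm_add]
    exact Nat.add_one_mul_choose_eq (n+2*r) (2*r)
  have h3 : (n+2*r+2) * c = b' * (2*r+2) := by
    rw [hc, hb', Nat.choose_symm_add, show n+2*(r+1) = (n+2*r+1)+1 by ring,
      show 2*(r+1) = (2*r+1)+1 by ring]
    exact Nat.add_one_mul_choose_eq (n+2*r+1) (2*r+1)
  have poly : (n+r+1) * ((2*r+1) * (2*r+2)) ≤ (r+1) * ((n+2*r+1) * (n+2*r+2)) := by
    have hid : (r+1) * ((n+2*r+1) * (n+2*r+2))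
        = (n+r+1) * ((2*r+1) * (2*r+2)) + (r+1) * (n*n+n) := by ring
    omega
  have main : (n+1) * a' * ((r+1) * ((2*r+1) * (2*r+2))) < b' * ((r+1) * ((2*r+1) * (2*r+2))) := by
    have l1 : (n+1) * a' * ((r+1) * ((2*r+1) * (2*r+2)))
        = (n+1) * a * ((n+r+1) * ((2*r+1) * (2*r+2))) := by
      have e : (n+1) * a' * ((r+1) * ((2*r+1) * (2*r+2)))
          = (n+1) * (a' * (r+1)) * ((2*r+1) * (2*r+2)) := by ring
      rw [e, ← h1]; ring
    have l2 : b' * ((r+1) * ((2*r+1) * (2*r+2)))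
        = b * ((r+1) * ((n+2*r+1) * (n+2*r+2))) := by
      have e : b' * ((r+1) * ((2*r+1) * (2*r+2)))
          = (b' * (2*r+2)) * ((r+1) * (2*r+1)) := by ring
      rw [e, ← h3]
      have e2 : (n+2*r+2) * c * ((r+1) * (2*r+1)) = (c * (2*r+1)) * ((r+1) * (n+2*r+2)) := by ring
      rw [e2, ← h2]; ring
    rw [l1, l2]
    calc (n+1) * a * ((n+r+1) * ((2*r+1) * (2*r+2)))
        < b * ((n+r+1) * ((2*r+1) * (2*r+2))) :=
          Nat.mul_lt_mul_of_pos_right h (by positivity)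
      _ ≤ b * ((r+1) * ((n+2*r+1) * (n+2*r+2))) := Nat.mul_le_mul le_rfl poly
  exact Nat.lt_of_mul_lt_mul_right main

lemma stepN (n r : ℕ) (hn : 2 ≤ n) (hr : 2 ≤ r)
    (h : (n+1) * (n+r).choose n < (n+2*r).choose n) :
    (n+2) * ((n+1)+r).choose (n+1) < ((n+1)+2*r).choose (n+1) := by
  set a := (n+r).choose n with ha
  set b := (n+2*r).choose n with hb
  set a' := ((n+1)+r).choose (n+1) with ha'
  set b' := ((n+1)+2*r).choose (n+1) with hb'
  have h1 : (n+r+1) * a = a' * (n+1) := by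
    rw [ha, ha', show (n+1)+r = (n+r)+1 by ring]
    exact Nat.add_one_mul_choose_eq (n+r) n
  have h2 : (n+2*r+1) * b = b' * (n+1) := by
    rw [hb, hb', show (n+1)+2*r = (n+2*r)+1 by ring]
    exact Nat.add_one_mul_choose_eq (n+2*r) n
  have factor : (n+2) * (n+r+1) ≤ (n+1) * (n+2*r+1) := by nlinarith
  have main : (n+2) * a' * ((n+1) * (n+1)) < b' * ((n+1) * (n+1)) := by
    have l1 : (n+2) * a' * ((n+1) * (n+1)) = (n+2) * (n+r+1) * ((n+1) * a) := by
      have e : (n+2) * a' * ((n+1) * (n+1)) = (n+2) * (a' * (n+1)) * (n+1) := by ring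
      rw [e, ← h1]; ring
    have l2 : b' * ((n+1) * (n+1)) = (n+1) * (n+2*r+1) * b := by
      have e : b' * ((n+1) * (n+1)) = (b' * (n+1)) * (n+1) := by ring
      rw [e, ← h2]; ring
    rw [l1, l2]
    calc (n+2) * (n+r+1) * ((n+1) * a)
        < (n+2) * (n+r+1) * b :=
          Nat.mul_lt_mul_of_pos_left h (by positivity)
      _ ≤ (n+1) * (n+2*r+1) * b := Nat.mul_le_mul factor le_rfl
  exact Nat.lt_of_mul_lt_mul_right main

lemma keyP (n r : ℕ) (hn : 2 ≤ n) (hr : 2 ≤ r)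
    (hA : n = 2 → 5 ≤ r) (hB : r = 2 → 6 ≤ n) :
    (n+1) * (n+r).choose n < (n+2*r).choose n := by
  have base2 : ∀ s, 5 ≤ s → (2+1) * (2+s).choose 2 < (2+2*s).choose 2 := by
    intro s hs
    induction s with
    | zero => omega
    | succ k ih =>
      rcases Nat.lt_or_ge k 5 with hk | hk
      · interval_cases k <;> first | omega | decide
      · exact stepR 2 k (ih (by omega))
  have base3 : ∀ s, 3 ≤ s → (3+1) * (3+s).choose 3 < (3+2*s).choose 3 := by
    intro s hs
    induction s with
    | zero => omega
    | succ k ih =>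
      rcases Nat.lt_or_ge k 3 with hk | hk
      · interval_cases k <;> first | omega | decide
      · exact stepR 3 k (ih (by omega))
  have baseN2 : ∀ m, 6 ≤ m → (m+1) * (m+2).choose m < (m+2*2).choose m := by
    intro m hm
    induction m with
    | zero => omega
    | succ k ih =>
      rcases Nat.lt_or_ge k 6 with hk | hk
      · interval_cases k <;> first | omega | decide
      · exact stepN k 2 (by omega) le_rfl (ih (by omega))
  have genN : ∀ m, 3 ≤ m → ∀ s, 3 ≤ s → (m+1) * (m+s).choose m < (m+2*s).choose m := by
    intro m hm
    induction m with
    | zero => omega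
    | succ k ih =>
      intro s hs
      rcases Nat.lt_or_ge k 3 with hk | hk
      · have hk2 : k = 2 := by omega
        subst hk2
        exact base3 s hs
      · exact stepN k s (by omega) (by omega) (ih hk s hs)
  rcases Nat.lt_or_ge n 3 with h2 | h3
  · have hn2 : n = 2 := by omega
    subst hn2
    exact base2 r (hA rfl)
  · rcases Nat.lt_or_ge r 3 with hr2 | hr3
    · have hr2' : r = 2 := by omega
      subst hr2'
      exact baseN2 n (hB rfl)
    · exact genN n h3 r hr3




/-- The Alexander–Hirschowitz rank `AH(n, 2r)` of a general form of degree `2r` in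
`n+1` variables; `⌈binom(n+2r,n)/(n+1)⌉` is computed as `(binom(n+2r,n)+n)/(n+1)`
in natural-number division. -/
def AH (n r : ℕ) : ℕ :=
  if (n, r) = (2, 2) then 6
  else if (n, r) = (3, 2) then 10
  else if (n, r) = (4, 2) then 15
  else ((n + 2 * r).choose n + n) / (n + 1)

/-- The cactus rank `binom(n+r,n)` of the `r`-th power of a nondegenerate quadric in
`n+1` variables is at most the Alexander–Hirschowitz rank `AH(n,r)`, with equality
exactly for `(n,r) ∈ {(2,2),(2,3),(2,4),(3,2),(4,2),(5,2)}`. -/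
theorem statement5 (n r : ℕ) (hn : 2 ≤ n) (hr : 2 ≤ r) :
    (n + r).choose n ≤ AH n r ∧
    ((n + r).choose n = AH n r ↔
      (n, r) = (2, 2) ∨ (n, r) = (2, 3) ∨ (n, r) = (2, 4) ∨
      (n, r) = (3, 2) ∨ (n, r) = (4, 2) ∨ (n, r) = (5, 2)) := by
  by_cases h22 : (n, r) = ((2:ℕ), (2:ℕ))
  · rw [Prod.mk.injEq] at h22; obtain ⟨rfl, rfl⟩ := h22; exact ⟨by decide, by decide⟩
  by_cases h23 : (n, r) = ((2:ℕ), (3:ℕ))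
  · rw [Prod.mk.injEq] at h23; obtain ⟨rfl, rfl⟩ := h23; exact ⟨by decide, by decide⟩
  by_cases h24 : (n, r) = ((2:ℕ), (4:ℕ))
  · rw [Prod.mk.injEq] at h24; obtain ⟨rfl, rfl⟩ := h24; exact ⟨by decide, by decide⟩
  by_cases h32 : (n, r) = ((3:ℕ), (2:ℕ))
  · rw [Prod.mk.injEq] at h32; obtain ⟨rfl, rfl⟩ := h32; exact ⟨by decide, by decide⟩
  by_cases h42 : (n, r) = ((4:ℕ), (2:ℕ))
  · rw [Prod.mk.injEq] at h42; obtain ⟨rfl, rfl⟩ := h42; exact ⟨by decide, by decide⟩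
  by_cases h52 : (n, r) = ((5:ℕ), (2:ℕ))
  · rw [Prod.mk.injEq] at h52; obtain ⟨rfl, rfl⟩ := h52; exact ⟨by decide, by decide⟩
  -- general case
  have h22' := h22; have h23' := h23; have h24' := h24
  have h32' := h32; have h42' := h42; have h52' := h52
  rw [Prod.mk.injEq, not_and_or] at h22' h23' h24' h32' h42' h52'
  have hA : n = 2 → 5 ≤ r := by omega
  have hB : r = 2 → 6 ≤ n := by omega
  have hkey := keyP n r hn hr hA hB
  have hAH : AH n r = ((n + 2 * r).choose n + n) / (n + 1) := by
    unfold AH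
    rw [if_neg h22, if_neg h32, if_neg h42]
  have hlt : (n + r).choose n < AH n r := by
    rw [hAH]
    have : (n + r).choose n + 1 ≤ ((n + 2 * r).choose n + n) / (n + 1) := by
      rw [Nat.le_div_iff_mul_le (by omega : 0 < n + 1)]
      nlinarith [hkey]
    omega
  refine ⟨le_of_lt hlt, ?_, ?_⟩
  · intro he; exact absurd he (ne_of_lt hlt)
  · rintro (hc | hc | hc | hc | hc | hc)
    · exact absurd hc h22
    · exact absurd hc h23
    · exact absurd hc h24
    · exact absurd hc h32
    · exact absurd hc h42
    · exact absurd hc h52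
end

section
/- Let q^{-1} = y_0y_1 + y_2y_3 ∈ ℂ[y_0,y_1,y_2,y_3]. For a_0,a_1,a_2,a_3 ∈ ℂ set p_l = a_1y_0 + a_0y_1 + a_3y_2 + a_2y_3 and q_l = (1/2)p_l^2 − (1/3)(a_0a_1 + a_2a_3)·q^{-1}. If a_0a_1 + a_2a_3 ≠ 0, then q_l is not a product of two homogeneous linear forms in ℂ[y_0,…,y_3] (its rank as a quadratic form is at least 3). If a_0a_1 + a_2a_3 = 0, then q_l = (1/2)p_l^2. -/
/-!
Compare Hessians. A product of two linear forms `(b ⬝ y)(c ⬝ y)` has Hessian `b cᵀ + c bᵀ`, of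
rank at most 2, while the Hessian of `q_l` is `p pᵀ - (s/3) J`, where `s = a_0a_1 + a_2a_3`,
`p` is the coefficient vector of `p_l` and `J` is the (invertible) Hessian of `q^{-1}`. So
`q_l = u v` would make `(s/3) J` a sum of three rank-one matrices, impossible for `s ≠ 0`.
-/

open MvPolynomial

/-- The inverse quadric `q^{-1} = y_0y_1 + y_2y_3`. -/
noncomputable def qQinv : MvPolynomial (Fin 4) ℂ := X 0 * X 1 + X 2 * X 3

/-- The polar `p_l = a_1y_0 + a_0y_1 + a_3y_2 + a_2y_3` of `l = a_0x_0+a_1x_1+a_2x_2+a_3x_3`. -/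
noncomputable def polarL (a0 a1 a2 a3 : ℂ) : MvPolynomial (Fin 4) ℂ :=
  C a1 * X 0 + C a0 * X 1 + C a3 * X 2 + C a2 * X 3

/-- `q_l = (1/2)p_l^2 − (1/3)(a_0a_1 + a_2a_3)·q^{-1}`. -/
noncomputable def qL (a0 a1 a2 a3 : ℂ) : MvPolynomial (Fin 4) ℂ :=
  C (1 / 2 : ℂ) * polarL a0 a1 a2 a3 ^ 2 - C ((a0 * a1 + a2 * a3) / 3) * qQinv

namespace MvPolynomial

variable {σ R : Type*} [CommSemiring R]

noncomputable def linearForm [Fintype σ] (b : σ → R) : MvPolynomial σ R := ∑ i, C (b i) * X i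

theorem IsHomogeneous.exists_eq_linearForm [Fintype σ] {u : MvPolynomial σ R}
    (hu : u.IsHomogeneous 1) : ∃ b : σ → R, u = linearForm b := by
  have hspan : u ∈ Submodule.span R (Set.range X) := by
    rw [← homogeneousSubmodule_one_eq_span_X]
    exact hu
  obtain ⟨b, hb⟩ := (Submodule.mem_span_range_iff_exists_fun R).mp hspan
  exact ⟨b, by simp [linearForm, ← hb, smul_eq_C_mul]⟩

theorem pderiv_linearForm [Fintype σ] [DecidableEq σ] (b : σ → R) (i : σ) :
    pderiv i (linearForm b) = C (b i) := by
  simp [linearForm, pderiv_X, Pi.single_apply]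

noncomputable def hessianAtZero : MvPolynomial σ R →ₗ[R] Matrix σ σ R where
  toFun f := Matrix.of fun i j => constantCoeff (pderiv i (pderiv j f))
  map_add' f g := by ext; simp
  map_smul' r f := by ext; simp

theorem hessianAtZero_apply (f : MvPolynomial σ R) (i j : σ) :
    hessianAtZero f i j = constantCoeff (pderiv i (pderiv j f)) := rfl

theorem hessianAtZero_linearForm_mul [Fintype σ] (b c : σ → R) :
    hessianAtZero (linearForm b * linearForm c) =
      Matrix.vecMulVec b c + Matrix.vecMulVec c b := by
  classical
  ext i j
  simp only [hessianAtZero_apply, Derivation.leibniz, pderiv_linearForm, smul_eq_mul, map_add,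
    derivation_C, mul_zero, zero_add, map_mul, constantCoeff_C, Matrix.add_apply,
    Matrix.vecMulVec_apply]
  ring

end MvPolynomial

theorem Matrix.rank_sum_vecMulVec_le {ι m n R : Type*} [Fintype ι] [Fintype n] [CommRing R]
    [StrongRankCondition R] (u : ι → m → R) (v : ι → n → R) :
    (∑ k, vecMulVec (u k) (v k)).rank ≤ Fintype.card ι := by
  have hfactor : ∑ k, vecMulVec (u k) (v k) = of (fun i k => u k i) * of (fun k j => v k j) := by
    ext i j
    simp [mul_apply, vecMulVec_apply, Matrix.sum_apply]
  rw [hfactor]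
  exact (rank_mul_le_left _ _).trans (rank_le_card_width _)

def qQinvMatrix : Matrix (Fin 4) (Fin 4) ℂ :=
  !![0, 1, 0, 0; 1, 0, 0, 0; 0, 0, 0, 1; 0, 0, 1, 0]

theorem hessianAtZero_qQinv : hessianAtZero qQinv = qQinvMatrix := by
  ext i j
  fin_cases i <;> fin_cases j <;> simp [hessianAtZero_apply, qQinv, qQinvMatrix, pderiv_X]

theorem qQinvMatrix_mul_self : qQinvMatrix * qQinvMatrix = 1 := by
  ext i j
  fin_cases i <;> fin_cases j <;> simp [qQinvMatrix, Matrix.mul_apply, Fin.sum_univ_four]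

theorem rank_smul_qQinvMatrix {t : ℂ} (ht : t ≠ 0) : (t • qQinvMatrix).rank = 4 := by
  have hdet : IsUnit qQinvMatrix.det := Matrix.isUnit_det_of_right_inverse qQinvMatrix_mul_self
  rw [Matrix.rank_of_isUnit _ ?_, Fintype.card_fin]
  rw [Matrix.isUnit_iff_isUnit_det, Matrix.det_smul]
  exact (isUnit_iff_ne_zero.mpr (pow_ne_zero _ ht)).mul hdet

theorem polarL_eq_linearForm (a0 a1 a2 a3 : ℂ) :
    polarL a0 a1 a2 a3 = linearForm ![a1, a0, a3, a2] := by
  simp [polarL, linearForm, Fin.sum_univ_four]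

theorem qL_ne_linearForm_mul {a0 a1 a2 a3 : ℂ} (hs : a0 * a1 + a2 * a3 ≠ 0) (b c : Fin 4 → ℂ) :
    qL a0 a1 a2 a3 ≠ linearForm b * linearForm c := by
  intro h
  set p : Fin 4 → ℂ := ![a1, a0, a3, a2]
  have hpoly : C ((a0 * a1 + a2 * a3) / 3) * qQinv
      = C (1 / 2 : ℂ) * (linearForm p * linearForm p) - linearForm b * linearForm c := by
    rw [← h, qL, polarL_eq_linearForm]
    ring
  have hmat := congrArg hessianAtZero hpoly
  simp only [← smul_eq_C_mul, map_sub, map_smul, hessianAtZero_qQinv,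
    hessianAtZero_linearForm_mul] at hmat
  have hsum : ((a0 * a1 + a2 * a3) / 3) • qQinvMatrix
      = ∑ k, Matrix.vecMulVec (![p, -b, -c] k) (![p, c, b] k) := by
    rw [hmat, Fin.sum_univ_three]
    simp only [Matrix.cons_val_zero, Matrix.cons_val_one, Matrix.cons_val, Matrix.neg_vecMulVec]
    module
  have hrank := Matrix.rank_sum_vecMulVec_le ![p, -b, -c] ![p, c, b]
  rw [← hsum, rank_smul_qQinvMatrix (div_ne_zero hs three_ne_zero), Fintype.card_fin] at hrank
  omega

/-- If `a_0a_1 + a_2a_3 ≠ 0` then `q_l` is not a product of two homogeneous linear forms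
(its rank as a quadratic form is at least 3); if `a_0a_1 + a_2a_3 = 0` then
`q_l = (1/2)p_l^2`. -/
theorem statement11 (a0 a1 a2 a3 : ℂ) :
    (a0 * a1 + a2 * a3 ≠ 0 →
      ¬ ∃ u v : MvPolynomial (Fin 4) ℂ,
          u.IsHomogeneous 1 ∧ v.IsHomogeneous 1 ∧ qL a0 a1 a2 a3 = u * v) ∧
    (a0 * a1 + a2 * a3 = 0 →
      qL a0 a1 a2 a3 = C (1 / 2 : ℂ) * polarL a0 a1 a2 a3 ^ 2) := by
  constructor
  · rintro hs ⟨u, v, hu, hv, h⟩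
    obtain ⟨b, rfl⟩ := hu.exists_eq_linearForm
    obtain ⟨c, rfl⟩ := hv.exists_eq_linearForm
    exact qL_ne_linearForm_mul hs b c h
  · intro hs
    simp [qL, hs]
end

section
/- Let q = x_0x_1 + x_2x_3 ∈ ℂ[x_0,x_1,x_2,x_3]. For all a_0, a_1, a_2 ∈ ℂ, the quadratic differential operator given by the form 3a_1^2·y_0^2 + 4a_0a_1·y_0y_1 + 3a_0^2·y_1^2 + 6a_1a_2·y_0y_3 + 6a_0a_2·y_1y_3 − 2a_0a_1·y_2y_3 + 3a_2^2·y_3^2 satisfies (3a_1^2y_0^2 + 4a_0a_1y_0y_1 + 3a_0^2y_1^2 + 6a_1a_2y_0y_3 + 6a_0a_2y_1y_3 − 2a_0a_1y_2y_3 + 3a_2^2y_3^2)(∂)(q^2) = 6·(a_0x_0 + a_1x_1 + a_2x_2)^2. (This describes the quadratic polarity correspondence q_l ↦ l^2 restricted to the tangent plane {y_3 = 0} of the inverse quadric Q^{-1} = {y_0y_1+y_2y_3=0} at the point (0:0:1:0).) -/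
/-!
The operator `g ↦ g(∂)` turns multiplication by `X j` into `∂_j ∘ g(∂)`, because partial
derivatives commute. So the quadratic operator becomes an explicit combination of second partials
of `q²`, and the claim is a polynomial identity.
-/

open MvPolynomial

/-- `g(∂)f`: the polynomial differential operator associated to `g` applied to `f`. -/
noncomputable def apolarAct {n : ℕ} (g f : MvPolynomial (Fin n) ℂ) :
    MvPolynomial (Fin n) ℂ :=
  (AddMonoidAlgebra.coeff g).sum fun α c => c • pdPow α f

lemma pderiv_pderiv_comm {σ R : Type*} [CommSemiring R] (i j : σ) (f : MvPolynomial σ R) :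
    pderiv i (pderiv j f) = pderiv j (pderiv i f) := by
  classical
  induction f using MvPolynomial.induction_on with
  | C a => simp
  | add p q hp hq => simp only [map_add, hp, hq]
  | mul_X p k hp =>
    simp only [Derivation.leibniz, map_add, smul_eq_mul, pderiv_X, Pi.single_apply, hp]
    split_ifs <;> simp <;> ring

lemma pderiv_ofNat {σ R : Type*} [CommSemiring R] (i : σ) (k : ℕ) [k.AtLeastTwo] :
    pderiv i (ofNat(k) : MvPolynomial σ R) = 0 :=
  (pderiv i).map_natCast k

section

variable {n : ℕ}

lemma foldr_iterate_pderiv_add_single (α : Fin n →₀ ℕ) (j : Fin n) :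
    ∀ (l : List (Fin n)), l.Nodup → ∀ f : MvPolynomial (Fin n) ℂ,
      l.foldr (fun i g => (pderiv i)^[(α + Finsupp.single j 1 : Fin n →₀ ℕ) i] g) f =
        if j ∈ l then pderiv j (l.foldr (fun i g => (pderiv i)^[α i] g) f)
        else l.foldr (fun i g => (pderiv i)^[α i] g) f
  | [], _, f => by simp
  | i :: l, hl, f => by
    rw [List.nodup_cons] at hl
    rw [List.foldr_cons, List.foldr_cons, foldr_iterate_pderiv_add_single α j l hl.2 f]
    by_cases hij : i = j
    · subst hij
      simp [hl.1, Function.iterate_succ_apply']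
    · simp only [Finsupp.add_apply, Finsupp.single_eq_of_ne hij, add_zero, List.mem_cons,
        Ne.symm hij, false_or]
      split_ifs
      · exact (Function.Commute.iterate_left (pderiv_pderiv_comm (R := ℂ) i j) _ _)
      · rfl

lemma pdPow_add_single (α : Fin n →₀ ℕ) (j : Fin n) (f : MvPolynomial (Fin n) ℂ) :
    pdPow (α + Finsupp.single j 1) f = pderiv j (pdPow α f) := by
  simpa [pdPow] using foldr_iterate_pderiv_add_single α j _ (List.nodup_finRange n) f

lemma pdPow_zero (f : MvPolynomial (Fin n) ℂ) : pdPow 0 f = f := by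
  simp [pdPow]

lemma apolarAct_add (g h f : MvPolynomial (Fin n) ℂ) :
    apolarAct (g + h) f = apolarAct g f + apolarAct h f :=
  Finsupp.sum_add_index' (by simp) (by intros; rw [add_smul])

lemma apolarAct_sub (g h f : MvPolynomial (Fin n) ℂ) :
    apolarAct (g - h) f = apolarAct g f - apolarAct h f :=
  Finsupp.sum_sub_index (by intros; rw [sub_smul])

lemma apolarAct_monomial (α : Fin n →₀ ℕ) (c : ℂ) (f : MvPolynomial (Fin n) ℂ) :
    apolarAct (monomial α c) f = c • pdPow α f :=
  Finsupp.sum_single_index (by simp)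

lemma apolarAct_C (c : ℂ) (f : MvPolynomial (Fin n) ℂ) : apolarAct (C c) f = c • f := by
  rw [← monomial_zero', apolarAct_monomial, pdPow_zero]

lemma apolarAct_mul_X (g f : MvPolynomial (Fin n) ℂ) (j : Fin n) :
    apolarAct (g * X j) f = pderiv j (apolarAct g f) := by
  induction g using MvPolynomial.induction_on' with
  | monomial α c =>
    rw [X, monomial_mul, mul_one, apolarAct_monomial, apolarAct_monomial, pdPow_add_single,
      Derivation.map_smul]
  | add p q hp hq => rw [add_mul, apolarAct_add, apolarAct_add, hp, hq, map_add]

end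

/-- The quadratic polarity `q_l ↦ l^2` restricted to the tangent plane `{y_3 = 0}` of the
inverse quadric `{y_0y_1+y_2y_3=0}` at the point `(0:0:1:0)`, for `q = x_0x_1 + x_2x_3`:
`(3a_1^2y_0^2 + 4a_0a_1y_0y_1 + 3a_0^2y_1^2 + 6a_1a_2y_0y_3 + 6a_0a_2y_1y_3
  − 2a_0a_1y_2y_3 + 3a_2^2y_3^2)(∂)(q^2) = 6(a_0x_0 + a_1x_1 + a_2x_2)^2`. -/
theorem statement14 (a0 a1 a2 : ℂ) :
    apolarAct
        (C (3 * a1 ^ 2) * X 0 ^ 2 + C (4 * a0 * a1) * X 0 * X 1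
          + C (3 * a0 ^ 2) * X 1 ^ 2 + C (6 * a1 * a2) * X 0 * X 3
          + C (6 * a0 * a2) * X 1 * X 3 - C (2 * a0 * a1) * X 2 * X 3
          + C (3 * a2 ^ 2) * X 3 ^ 2)
        ((X 0 * X 1 + X 2 * X 3 : MvPolynomial (Fin 4) ℂ) ^ 2)
      = 6 * (C a0 * X 0 + C a1 * X 1 + C a2 * X 2) ^ 2 := by
  simp only [apolarAct_add, apolarAct_sub, sq (X _ : MvPolynomial (Fin 4) ℂ), ← mul_assoc,
    apolarAct_mul_X, apolarAct_C, Derivation.map_smul]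
  simp only [Derivation.leibniz_pow, Derivation.leibniz, map_add, pderiv_X, Pi.single_eq_same,
    Pi.single_eq_of_ne, ne_eq, Fin.reduceEq, one_ne_zero, zero_ne_one, not_false_eq_true,
    pderiv_ofNat, smul_eq_mul, nsmul_eq_mul, Nat.cast_ofNat, smul_eq_C_mul, C_mul, C_pow, map_ofNat,
    Nat.add_one_sub_one, pow_one, mul_zero, mul_one, zero_add, add_zero]
  ring
end
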